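/- Let t be a well-typed linear thin λ-term with ports. Then the β-normal form of t has no branching node: every node of the normal form has at most one child that is not a port. In other words, the normal form of a linear thin λ-term has the shape of a word. -/
import Mathlib


/-- Simple types: τ ::= o | τ → τ. -/
inductive Ty : Type
  | o : Ty
  | arrow : Ty → Ty → Ty
deriving DecidableEq


/-- λ-terms with ports over a set `V` of typed variables: leaves are variables
or numbered ports, unary nodes are abstractions `λx`, binary nodes are
applications `@`. -/
inductive PTm (V : Type) : Type
  | port : ℕ → PTm V
  | var : V → PTm V
  | lam : V → PTm V → PTm V
  | app : PTm V → PTm V → PTm V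

/-- Whether the root of a term is a port. -/
def PTm.isPort {V : Type} : PTm V → Prop
  | PTm.port _ => True
  | _ => False

/-- Nodes of a term are addressed by lists of directions: `false` goes to the
(left or unique) child, `true` to the right child. `subtermAt t p` is the
subterm rooted at the node `p`, if `p` is a node of `t`. -/
def subtermAt {V : Type} : PTm V → List Bool → Option (PTm V)
  | t, [] => some t
  | PTm.lam _ M, false :: p => subtermAt M p
  | PTm.app M _, false :: p => subtermAt M p
  | PTm.app _ N, true :: p => subtermAt N p
  | _, _ => none

/-- `PreLt p q`: node `p` strictly precedes node `q` in the depth-first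
left-to-right (pre-order) traversal. -/
inductive PreLt : List Bool → List Bool → Prop
  | nil {q : List Bool} : q ≠ [] → PreLt [] q
  | cons {p q : List Bool} (a : Bool) : PreLt p q → PreLt (a :: p) (a :: q)
  | leftRight (p q : List Bool) : PreLt (false :: p) (true :: q)

/-- Number of free occurrences of the variable `x` (ports count for no
variable). -/
def freeCountP {V : Type} [DecidableEq V] (x : V) : PTm V → ℕ
  | PTm.port _ => 0
  | PTm.var y => if y = x then 1 else 0
  | PTm.lam y M => if y = x then 0 else freeCountP x M
  | PTm.app M N => freeCountP x M + freeCountP x N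

/-- A λ-term with ports is linear if every free variable occurs exactly once
(in particular at most once) and every abstraction `λx` binds exactly one
occurrence of `x`. -/
def LinearP {V : Type} [DecidableEq V] (t : PTm V) : Prop :=
  (∀ x : V, freeCountP x t ≤ 1) ∧
  (∀ (p : List Bool) (x : V) (N : PTm V),
    subtermAt t p = some (PTm.lam x N) → freeCountP x N = 1)

/-- A λ-term with ports is thin if every branching node (a node with at least
two non-port children, i.e. an application node with two non-port children)
is the application node of a redex. -/
def Thin {V : Type} (t : PTm V) : Prop :=
  ∀ (p : List Bool) (M N : PTm V),
    subtermAt t p = some (PTm.app M N) → ¬ M.isPort → ¬ N.isPort →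
    ∃ (x : V) (M' : PTm V), M = PTm.lam x M'

/-- `FreeOccAt x M r`: the node `r` of `M` is a free occurrence of the
variable `x` (no abstraction `λx` lies strictly above it in `M`). -/
def FreeOccAt {V : Type} (x : V) (M : PTm V) (r : List Bool) : Prop :=
  subtermAt M r = some (PTm.var x) ∧
  ∀ q : List Bool, q <+: r → q ≠ r →
    ∀ M' : PTm V, subtermAt M q ≠ some (PTm.lam x M')

/-- Typing relation for λ-terms with ports: ports are treated as fresh free
variables, whose types are given by `ptyOf`. -/
inductive HasTyP {V : Type} (tyOf : V → Ty) (ptyOf : ℕ → Ty) : PTm V → Ty → Prop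
  | port (i : ℕ) : HasTyP tyOf ptyOf (PTm.port i) (ptyOf i)
  | var (x : V) : HasTyP tyOf ptyOf (PTm.var x) (tyOf x)
  | lam (x : V) {M : PTm V} {τ : Ty} :
      HasTyP tyOf ptyOf M τ →
      HasTyP tyOf ptyOf (PTm.lam x M) (Ty.arrow (tyOf x) τ)
  | app {M N : PTm V} {σ τ : Ty} :
      HasTyP tyOf ptyOf M (Ty.arrow σ τ) → HasTyP tyOf ptyOf N σ →
      HasTyP tyOf ptyOf (PTm.app M N) τ

/-- Substitution of `N` for the free occurrences of `x`. -/
def substP {V : Type} [DecidableEq V] (x : V) (N : PTm V) : PTm V → PTm V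
  | PTm.port i => PTm.port i
  | PTm.var y => if y = x then N else PTm.var y
  | PTm.lam y M => if y = x then PTm.lam y M else PTm.lam y (substP x N M)
  | PTm.app M₁ M₂ => PTm.app (substP x N M₁) (substP x N M₂)

/-- No free variable of `N` is bound anywhere inside `M` (Barendregt-style
freshness condition), so that naive substitution of `N` in `M` is
capture-avoiding. -/
def NoCaptureP {V : Type} [DecidableEq V] (M N : PTm V) : Prop :=
  ∀ y : V, 1 ≤ freeCountP y N →
    ∀ (p : List Bool) (M' : PTm V), subtermAt M p ≠ some (PTm.lam y M')

/-- One step of β-reduction on λ-terms with ports: contract a redex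
`(λx.M) N` to `M[N/x]` (under the capture-avoidance condition), anywhere
inside the term. -/
inductive StepP {V : Type} [DecidableEq V] : PTm V → PTm V → Prop
  | beta (x : V) (M N : PTm V) :
      NoCaptureP M N → StepP (PTm.app (PTm.lam x M) N) (substP x N M)
  | appL {M M' : PTm V} (N : PTm V) : StepP M M' → StepP (PTm.app M N) (PTm.app M' N)
  | appR (M : PTm V) {N N' : PTm V} : StepP N N' → StepP (PTm.app M N) (PTm.app M N')
  | lam (x : V) {M M' : PTm V} : StepP M M' → StepP (PTm.lam x M) (PTm.lam x M')

/-- `NormalFormOfP t u` : `u` is a β-normal form of `t`. -/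
def NormalFormOfP {V : Type} [DecidableEq V] (t u : PTm V) : Prop :=
  Relation.ReflTransGen StepP t u ∧ ∀ v, ¬ StepP u v

/-! ### Auxiliary machinery -/

/-- Total number of variable leaves (free or bound). -/
def varCount {V : Type} : PTm V → ℕ
  | PTm.port _ => 0
  | PTm.var _ => 1
  | PTm.lam _ M => varCount M
  | PTm.app M N => varCount M + varCount N

/-- Structural version of thinness. -/
def thinS {V : Type} : PTm V → Prop
  | PTm.port _ => True
  | PTm.var _ => True
  | PTm.lam _ M => thinS M
  | PTm.app M N =>
      (¬ M.isPort → ¬ N.isPort → ∃ x M', M = PTm.lam x M') ∧ thinS M ∧ thinS N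

/-- Structural version of "every abstraction binds exactly one occurrence". -/
def lin2S {V : Type} [DecidableEq V] : PTm V → Prop
  | PTm.port _ => True
  | PTm.var _ => True
  | PTm.lam x M => freeCountP x M = 1 ∧ lin2S M
  | PTm.app M N => lin2S M ∧ lin2S N

/-- No application node has an abstraction as left child: no redex. -/
def noRedexS {V : Type} : PTm V → Prop
  | PTm.port _ => True
  | PTm.var _ => True
  | PTm.lam _ M => noRedexS M
  | PTm.app M N => (∀ x M', M ≠ PTm.lam x M') ∧ noRedexS M ∧ noRedexS N

lemma freeCount_le_varCount {V : Type} [DecidableEq V] (x : V) :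
    ∀ t : PTm V, freeCountP x t ≤ varCount t := by
  intro t; induction t with
  | port i => simp [freeCountP, varCount]
  | var y => by_cases h : y = x <;> simp [freeCountP, varCount, h]
  | lam y M ih => by_cases h : y = x <;> simp [freeCountP, varCount, h] <;> omega
  | app M N ihM ihN => simp [freeCountP, varCount]; omega

lemma freeCount_pair_le {V : Type} [DecidableEq V] {x y : V} (hxy : x ≠ y) :
    ∀ t : PTm V, freeCountP x t + freeCountP y t ≤ varCount t := by
  intro t; induction t with
  | port i => simp [freeCountP, varCount]
  | var z =>
      simp only [freeCountP, varCount]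
      by_cases hx : z = x
      · subst hx; rw [if_pos rfl, if_neg hxy]
      · rw [if_neg hx]; split <;> omega
  | lam z M ih =>
      have h1 := freeCount_le_varCount x M
      have h2 := freeCount_le_varCount y M
      simp only [freeCountP, varCount]
      split <;> split <;> omega
  | app M N ihM ihN => simp [freeCountP, varCount]; omega

/-- Positional thinness implies structural thinness. -/
lemma thinS_ofPos {V : Type} :
    ∀ t : PTm V, Thin t → thinS t := by
  intro t; induction t with
  | port i => intro _; trivial
  | var y => intro _; trivial
  | lam y M ih =>
      intro h; exact ih (fun p A B hp => h (false :: p) A B hp)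
  | app M N ihM ihN =>
      intro h
      refine ⟨fun hM hN => h [] M N rfl hM hN, ?_, ?_⟩
      · exact ihM (fun p A B hp => h (false :: p) A B hp)
      · exact ihN (fun p A B hp => h (true :: p) A B hp)

lemma lin2S_ofPos {V : Type} [DecidableEq V] :
    ∀ t : PTm V,
      (∀ (p : List Bool) (x : V) (N : PTm V),
        subtermAt t p = some (PTm.lam x N) → freeCountP x N = 1) → lin2S t := by
  intro t; induction t with
  | port i => intro _; trivial
  | var y => intro _; trivial
  | lam y M ih =>
      intro h
      exact ⟨h [] y M rfl, ih (fun p x N hp => h (false :: p) x N hp)⟩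
  | app M N ihM ihN =>
      intro h
      exact ⟨ihM (fun p x A hp => h (false :: p) x A hp),
             ihN (fun p x A hp => h (true :: p) x A hp)⟩

lemma thinS_sub {V : Type} :
    ∀ (t : PTm V) (p : List Bool) (S : PTm V),
      thinS t → subtermAt t p = some S → thinS S := by
  intro t; induction t with
  | port i =>
      intro p S h hp; cases p with
      | nil => simp [subtermAt] at hp; subst hp; trivial
      | cons a q => cases a <;> simp [subtermAt] at hp
  | var y =>
      intro p S h hp; cases p with
      | nil => simp [subtermAt] at hp; subst hp; trivial
      | cons a q => cases a <;> simp [subtermAt] at hp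
  | lam y M ih =>
      intro p S h hp; cases p with
      | nil => simp [subtermAt] at hp; subst hp; exact h
      | cons a q =>
          cases a
          · exact ih q S h hp
          · simp [subtermAt] at hp
  | app M N ihM ihN =>
      intro p S h hp; cases p with
      | nil => simp [subtermAt] at hp; subst hp; exact h
      | cons a q =>
          cases a
          · exact ihM q S h.2.1 hp
          · exact ihN q S h.2.2 hp

lemma lin2S_sub {V : Type} [DecidableEq V] :
    ∀ (t : PTm V) (p : List Bool) (S : PTm V),
      lin2S t → subtermAt t p = some S → lin2S S := by
  intro t; induction t with
  | port i =>
      intro p S h hp; cases p with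
      | nil => simp [subtermAt] at hp; subst hp; trivial
      | cons a q => cases a <;> simp [subtermAt] at hp
  | var y =>
      intro p S h hp; cases p with
      | nil => simp [subtermAt] at hp; subst hp; trivial
      | cons a q => cases a <;> simp [subtermAt] at hp
  | lam y M ih =>
      intro p S h hp; cases p with
      | nil => simp [subtermAt] at hp; subst hp; exact h
      | cons a q =>
          cases a
          · exact ih q S h.2 hp
          · simp [subtermAt] at hp
  | app M N ihM ihN =>
      intro p S h hp; cases p with
      | nil => simp [subtermAt] at hp; subst hp; exact h
      | cons a q =>
          cases a
          · exact ihM q S h.1 hp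
          · exact ihN q S h.2 hp

lemma noRedexS_sub {V : Type} :
    ∀ (t : PTm V) (p : List Bool) (S : PTm V),
      noRedexS t → subtermAt t p = some S → noRedexS S := by
  intro t; induction t with
  | port i =>
      intro p S h hp; cases p with
      | nil => simp [subtermAt] at hp; subst hp; trivial
      | cons a q => cases a <;> simp [subtermAt] at hp
  | var y =>
      intro p S h hp; cases p with
      | nil => simp [subtermAt] at hp; subst hp; trivial
      | cons a q => cases a <;> simp [subtermAt] at hp
  | lam y M ih =>
      intro p S h hp; cases p with
      | nil => simp [subtermAt] at hp; subst hp; exact h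
      | cons a q =>
          cases a
          · exact ih q S h hp
          · simp [subtermAt] at hp
  | app M N ihM ihN =>
      intro p S h hp; cases p with
      | nil => simp [subtermAt] at hp; subst hp; exact h
      | cons a q =>
          cases a
          · exact ihM q S h.2.1 hp
          · exact ihN q S h.2.2 hp

lemma nc_lam {V : Type} [DecidableEq V] {y : V} {D N : PTm V}
    (h : NoCaptureP (PTm.lam y D) N) : NoCaptureP D N :=
  fun w hw p M' => h w hw (false :: p) M'

lemma nc_appL {V : Type} [DecidableEq V] {A B N : PTm V}
    (h : NoCaptureP (PTm.app A B) N) : NoCaptureP A N :=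
  fun w hw p M' => h w hw (false :: p) M'

lemma nc_appR {V : Type} [DecidableEq V] {A B N : PTm V}
    (h : NoCaptureP (PTm.app A B) N) : NoCaptureP B N :=
  fun w hw p M' => h w hw (true :: p) M'

lemma nc_lam_count {V : Type} [DecidableEq V] {y : V} {D N : PTm V}
    (h : NoCaptureP (PTm.lam y D) N) : freeCountP y N = 0 := by
  by_contra hne
  exact h y (by omega) [] D rfl

/-- Counting free occurrences after substitution. -/
lemma count_subst {V : Type} [DecidableEq V] (x z : V) (N : PTm V) :
    ∀ M : PTm V, NoCaptureP M N →
      freeCountP z (substP x N M) =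
        (if z = x then 0 else freeCountP z M) + freeCountP x M * freeCountP z N := by
  intro M; induction M with
  | port i => intro _; simp [substP, freeCountP]
  | var y =>
      intro _
      by_cases hy : y = x
      · subst hy
        by_cases hz : z = y <;> simp [substP, freeCountP, hz] <;> simp [Ne.symm hz]
      · by_cases hz : y = z <;> by_cases hzx : z = x <;>
          simp_all [substP, freeCountP] <;> omega
  | lam w D ih =>
      intro hnc
      by_cases hw : w = x
      · subst hw
        by_cases hz : z = w <;> simp [substP, freeCountP, hz]
      · have hD := ih (nc_lam hnc)
        by_cases hz : w = z
        · subst hz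
          have h0 : freeCountP w N = 0 := nc_lam_count hnc
          have hzx : ¬ (w = x) := hw
          simp [substP, freeCountP, hw, h0]
        · simp [substP, freeCountP, hw, hz, hD]
  | app A B ihA ihB =>
      intro hnc
      have hA := ihA (nc_appL hnc)
      have hB := ihB (nc_appR hnc)
      simp only [substP, freeCountP, hA, hB]
      by_cases hz : z = x <;> simp [hz] <;> ring

lemma isPort_subst {V : Type} [DecidableEq V] (x : V) (N B : PTm V)
    (h : B.isPort) : (substP x N B).isPort := by
  cases B <;> simp [PTm.isPort] at h ⊢ <;> simp [substP, PTm.isPort]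

/-- Thinness is preserved by substitution. -/
lemma thinS_subst {V : Type} [DecidableEq V] (x : V) (N : PTm V) (hN : thinS N) :
    ∀ M : PTm V, thinS M → thinS (substP x N M) := by
  intro M; induction M with
  | port i => intro _; trivial
  | var y =>
      intro _
      by_cases hy : y = x <;> simp [substP, hy]
      · exact hN
      · trivial
  | lam w D ih =>
      intro h
      by_cases hw : w = x <;> simp [substP, hw, thinS]
      · exact h
      · exact ih h
  | app A B ihA ihB =>
      intro h
      obtain ⟨hcond, hA, hB⟩ := h
      refine ⟨?_, ihA hA, ihB hB⟩
      intro hA' hB'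
      have hAnp : ¬ A.isPort := fun hp => hA' (isPort_subst x N A hp)
      have hBnp : ¬ B.isPort := fun hp => hB' (isPort_subst x N B hp)
      obtain ⟨y, A', rfl⟩ := hcond hAnp hBnp
      by_cases hy : y = x
      · exact ⟨y, A', by simp [substP, hy]⟩
      · exact ⟨y, substP x N A', by simp [substP, hy]⟩

/-- `lin2S` is preserved by substitution. -/
lemma lin2S_subst {V : Type} [DecidableEq V] (x : V) (N : PTm V) (hN : lin2S N) :
    ∀ M : PTm V, NoCaptureP M N → lin2S M → lin2S (substP x N M) := by
  intro M; induction M with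
  | port i => intro _ _; trivial
  | var y =>
      intro _ _
      by_cases hy : y = x <;> simp [substP, hy]
      · exact hN
      · trivial
  | lam w D ih =>
      intro hnc h
      by_cases hw : w = x
      · simpa [substP, hw] using h
      · have h0 : freeCountP w N = 0 := nc_lam_count hnc
        have hc := count_subst x w N D (nc_lam hnc)
        have heq : substP x N (PTm.lam w D) = PTm.lam w (substP x N D) := by
          simp [substP, hw]
        rw [heq]
        refine ⟨?_, ih (nc_lam hnc) h.2⟩
        rw [hc]; simp [hw, h0, h.1]
  | app A B ihA ihB =>
      intro hnc h
      exact ⟨ihA (nc_appL hnc) h.1, ihB (nc_appR hnc) h.2⟩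

lemma not_isPort_of_step {V : Type} [DecidableEq V] {M M' : PTm V}
    (h : StepP M M') : ¬ M.isPort := by
  cases h <;> simp [PTm.isPort]

/-- One β-step preserves thinness, `lin2S`, and all free-variable counts. -/
lemma step_pres {V : Type} [DecidableEq V] {t t' : PTm V} (h : StepP t t') :
    thinS t → lin2S t →
    thinS t' ∧ lin2S t' ∧ ∀ z, freeCountP z t' = freeCountP z t := by
  induction h with
  | beta x M N hnc =>
      intro ht hl
      obtain ⟨_, hM, hN⟩ := ht
      obtain ⟨⟨hx1, hlM⟩, hlN⟩ := hl
      refine ⟨thinS_subst x N hN M hM, lin2S_subst x N hlN M hnc hlM, ?_⟩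
      intro z
      have hc := count_subst x z N M hnc
      by_cases hz : z = x
      · subst hz
        simp [hc, hx1, freeCountP]
      · have : ¬ (x = z) := fun hh => hz hh.symm
        simp [hc, hz, hx1, freeCountP, this]
  | appL N hMM ih =>
      intro ht hl
      obtain ⟨hcond, hM, hN⟩ := ht
      obtain ⟨hlM, hlN⟩ := hl
      obtain ⟨hM', hlM', hcnt⟩ := ih hM hlM
      refine ⟨⟨?_, hM', hN⟩, ⟨hlM', hlN⟩, ?_⟩
      · intro _ hNp
        obtain ⟨y, B, rfl⟩ := hcond (not_isPort_of_step hMM) hNp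
        cases hMM with
        | lam _ hstep => exact ⟨y, _, rfl⟩
      · intro z; simp [freeCountP, hcnt]
  | appR M hNN ih =>
      intro ht hl
      obtain ⟨hcond, hM, hN⟩ := ht
      obtain ⟨hlM, hlN⟩ := hl
      obtain ⟨hN', hlN', hcnt⟩ := ih hN hlN
      refine ⟨⟨?_, hM, hN'⟩, ⟨hlM, hlN'⟩, ?_⟩
      · intro hMp _
        exact hcond hMp (not_isPort_of_step hNN)
      · intro z; simp [freeCountP, hcnt]
  | lam y hMM ih =>
      intro ht hl
      obtain ⟨h1, hlM⟩ := hl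
      obtain ⟨hM', hlM', hcnt⟩ := ih ht hlM
      refine ⟨hM', ⟨by rw [hcnt]; exact h1, hlM'⟩, ?_⟩
      intro z
      by_cases hz : y = z <;> simp [freeCountP, hz, hcnt]

lemma rtg_pres {V : Type} [DecidableEq V] {t u : PTm V}
    (h : Relation.ReflTransGen StepP t u) :
    thinS t → lin2S t → thinS u ∧ lin2S u := by
  induction h with
  | refl => intro h1 h2; exact ⟨h1, h2⟩
  | tail _ hstep ih =>
      intro h1 h2
      obtain ⟨ha, hb⟩ := ih h1 h2
      obtain ⟨hc, hd, _⟩ := step_pres hstep ha hb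
      exact ⟨hc, hd⟩

/-- In a thin term with no redex, there is at most one variable leaf. -/
lemma word_varCount {V : Type} :
    ∀ t : PTm V, thinS t → noRedexS t → varCount t ≤ 1 := by
  intro t; induction t with
  | port i => intro _ _; simp [varCount]
  | var y => intro _ _; simp [varCount]
  | lam y M ih => intro h1 h2; exact ih h1 h2
  | app M N ihM ihN =>
      intro h1 h2
      obtain ⟨hcond, hM, hN⟩ := h1
      obtain ⟨hnr, hnM, hnN⟩ := h2
      by_cases hMp : M.isPort
      · have : varCount M = 0 := by cases M <;> simp [PTm.isPort] at hMp <;> simp [varCount]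
        have := ihN hN hnN
        simp [varCount]; omega
      · by_cases hNp : N.isPort
        · have : varCount N = 0 := by cases N <;> simp [PTm.isPort] at hNp <;> simp [varCount]
          have := ihM hM hnM
          simp [varCount]; omega
        · obtain ⟨y, B, rfl⟩ := hcond hMp hNp
          exact absurd rfl (hnr y B)

/-- If a term contains an abstraction, its free count plus the bound count
of that abstraction is dominated by the number of variable leaves. -/
lemma countW {V : Type} [DecidableEq V] (x : V) :
    ∀ (B : PTm V) (p : List Bool) (y : V) (C : PTm V),
      subtermAt B p = some (PTm.lam y C) →
      freeCountP x B + freeCountP y C ≤ varCount B := by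
  intro B; induction B with
  | port i =>
      intro p y C hp; cases p with
      | nil => simp [subtermAt] at hp
      | cons a q => cases a <;> simp [subtermAt] at hp
  | var z =>
      intro p y C hp; cases p with
      | nil => simp [subtermAt] at hp
      | cons a q => cases a <;> simp [subtermAt] at hp
  | lam z D ih =>
      intro p y C hp; cases p with
      | nil =>
          simp only [subtermAt, Option.some.injEq] at hp
          obtain ⟨rfl, rfl⟩ := PTm.lam.inj hp
          by_cases hx : x = z
          · subst hx
            simpa [freeCountP, varCount] using freeCount_le_varCount x D
          · have h1 := freeCount_pair_le hx D
            have h2 : freeCountP x (PTm.lam z D) = freeCountP x D := by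
              have : ¬ (z = x) := fun h => hx h.symm
              simp [freeCountP, this]
            simp only [varCount]; omega
      | cons a q =>
          cases a
          · have hW := ih q y C hp
            have hle : freeCountP x (PTm.lam z D) ≤ freeCountP x D := by
              simp only [freeCountP]; split <;> omega
            simp only [varCount]; omega
          · simp [subtermAt] at hp
  | app A B ihA ihB =>
      intro p y C hp; cases p with
      | nil => simp [subtermAt] at hp
      | cons a q =>
          cases a
          · have h1 := ihA q y C hp
            have h2 := freeCount_le_varCount x B
            simp [freeCountP, varCount]; omega
          · have h1 := ihB q y C hp
            have h2 := freeCount_le_varCount x A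
            simp [freeCountP, varCount]; omega

/-- A thin linear term in normal form has no redex at all. -/
lemma noredex_of_normal {V : Type} [DecidableEq V] :
    ∀ u : PTm V, thinS u → lin2S u → (∀ v, ¬ StepP u v) → noRedexS u := by
  intro u; induction u with
  | port i => intro _ _ _; trivial
  | var y => intro _ _ _; trivial
  | lam y M ih =>
      intro h1 h2 hn
      exact ih h1 h2.2 (fun v hv => hn _ (StepP.lam y hv))
  | app M N ihM ihN =>
      intro h1 h2 hn
      obtain ⟨hcond, hM, hN⟩ := h1
      obtain ⟨hlM, hlN⟩ := h2
      have hnrM : noRedexS M := ihM hM hlM (fun v hv => hn _ (StepP.appL N hv))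
      have hnrN : noRedexS N := ihN hN hlN (fun v hv => hn _ (StepP.appR M hv))
      refine ⟨?_, hnrM, hnrN⟩
      rintro x B rfl
      by_cases hnc : NoCaptureP B N
      · exact hn _ (StepP.beta x B N hnc)
      · -- extract a captured abstraction inside B
        simp only [NoCaptureP, not_forall] at hnc
        obtain ⟨y, _, p, C, hpC⟩ := hnc
        have hpC' : subtermAt B p = some (PTm.lam y C) := by
          by_contra hcc; exact hpC hcc
        have hx1 : freeCountP x B = 1 := hlM.1
        have hyC : freeCountP y C = 1 :=
          (lin2S_sub B p (PTm.lam y C) hlM.2 hpC').1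
        have hword : varCount B ≤ 1 := word_varCount B hM hnrM
        have hW := countW x B p y C hpC'
        omega

/-- The β-normal form of a well-typed linear thin λ-term with ports has no
branching node: every application node in it has at least one port child,
i.e. every node has at most one non-port child, so the normal form has the
shape of a word. -/
theorem normal_form_of_thin_is_word {V : Type} [DecidableEq V]
    (tyOf : V → Ty) (ptyOf : ℕ → Ty) (t : PTm V)
    (hty : ∃ τ : Ty, HasTyP tyOf ptyOf t τ)
    (hlin : LinearP t) (hthin : Thin t)
    (u : PTm V) (hnf : NormalFormOfP t u) :
    ∀ (p : List Bool) (M N : PTm V),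
      subtermAt u p = some (PTm.app M N) → M.isPort ∨ N.isPort := by
  obtain ⟨hrt, hns⟩ := hnf
  have ht0 : thinS t := thinS_ofPos t hthin
  have hl0 : lin2S t := lin2S_ofPos t hlin.2
  obtain ⟨htu, hlu⟩ := rtg_pres hrt ht0 hl0
  have hnr : noRedexS u := noredex_of_normal u htu hlu hns
  intro p M N hsub
  by_cases hMp : M.isPort
  · exact Or.inl hMp
  by_cases hNp : N.isPort
  · exact Or.inr hNp
  exfalso
  have hthin' : thinS (PTm.app M N) := thinS_sub u p _ htu hsub
  obtain ⟨x, B, rfl⟩ := hthin'.1 hMp hNp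
  have : noRedexS (PTm.app (PTm.lam x B) N) := noRedexS_sub u p _ hnr hsub
  exact this.1 x B rfl
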